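/- Let ρ₁ > 0 and ρ₂ > 0 with ρ₁ ≠ ρ₂, and let d₁ ∈ [0, min(g(0,0,N₁;ρ₁), g(0,0,N₁;ρ₂))]. If g(d₁,N₁,N₂;ρ₁) = g(d₁,N₁,N₂;ρ₂), then, writing d₂ for this common value, σ(N₁d₁ + N₂d₂) = φD, i.e., d₁ = (φD − σN₂d₂)/(σN₁). -/

import Mathlib

/-- `B(d,N;ρ)` with parameters `σ φ D T`. -/
noncomputable def B (σ φ D T ρ N d : ℝ) : ℝ :=
  φ * D * (1 + ρ * φ * D / T) - σ * N * d - ρ * σ ^ 2 * N * d ^ 2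

/-- `g(d,N',N;ρ)` with parameters `σ φ D T`. -/
noncomputable def g (σ φ D T ρ N' N d : ℝ) : ℝ :=
  (-1 + Real.sqrt (1 + (4 * ρ / N) * B σ φ D T ρ N' d)) / (2 * σ * ρ)

/-- `f(d₁,N₂;ρ,τ)` with parameters `σ φ D T` and `N₁`. -/
noncomputable def f (σ φ D T ρ τ N₁ N₂ d₁ : ℝ) : ℝ :=
  N₁ * d₁ + N₂ * g σ φ D T ρ N₁ N₂ d₁ +
    τ * (N₁ * d₁ ^ 2 + N₂ * (g σ φ D T ρ N₁ N₂ d₁) ^ 2)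

/-!
Write `q(x;N,ρ) = σNx + ρσ²Nx²`, so that `B(d,N;ρ) = B(0,0;ρ) − q(d;N,ρ)` and `g(d,N',N;ρ)` is the
nonnegative root of `q(x;N,ρ) = B(d,N';ρ)`. Since `q` is increasing on `[0,∞)`, `d₁ ≤ g(0,0,N₁;ρ)` gives
`B(d₁,N₁;ρ) ≥ 0`, hence `q(d₁;N₁,ρ) + q(d₂;N₂,ρ) = B(0,0;ρ)` for `d₂ = g(d₁,N₁,N₂;ρ)`. Expanded, this reads
`σ(N₁d₁ + N₂d₂) + ρσ²(N₁d₁² + N₂d₂²) = φD + ρ(φD)²/T`, an identity between affine functions of `ρ`;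
holding at two distinct values `ρ₁ ≠ ρ₂` with the same `d₂`, it forces the constant terms to agree.
-/

noncomputable def q (σ ρ N x : ℝ) : ℝ := σ * N * x + ρ * σ ^ 2 * N * x ^ 2

lemma B_eq_B_zero_sub_q (σ φ D T ρ N d : ℝ) :
    B σ φ D T ρ N d = B σ φ D T ρ 0 0 - q σ ρ N d := by
  unfold B q
  ring

lemma q_monotoneOn {σ ρ N : ℝ} (hσ : 0 ≤ σ) (hρ : 0 ≤ ρ) (hN : 0 ≤ N) :
    MonotoneOn (q σ ρ N) (Set.Ici 0) := by
  intro x hx y _ hxy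
  unfold q
  have hσN : 0 ≤ σ * N := mul_nonneg hσ hN
  have hρσN : 0 ≤ ρ * σ ^ 2 * N := by positivity
  gcongr

lemma q_g {σ φ D T ρ N' N d : ℝ} (hσ : σ ≠ 0) (hρ : ρ ≠ 0) (hN : N ≠ 0)
    (h : 0 ≤ 1 + 4 * ρ / N * B σ φ D T ρ N' d) :
    q σ ρ N (g σ φ D T ρ N' N d) = B σ φ D T ρ N' d := by
  have hsq := Real.sq_sqrt h
  unfold q g
  generalize Real.sqrt _ = s at hsq ⊢
  field_simp at hsq ⊢
  linear_combination hsq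

lemma one_add_nonneg_of_g_nonneg {σ φ D T ρ N' N d : ℝ} (hσ : 0 < σ) (hρ : 0 < ρ)
    (hg : 0 ≤ g σ φ D T ρ N' N d) : 0 ≤ 1 + 4 * ρ / N * B σ φ D T ρ N' d := by
  by_contra! h
  have hsqrt : Real.sqrt (1 + 4 * ρ / N * B σ φ D T ρ N' d) = 0 := Real.sqrt_eq_zero'.2 h.le
  have : g σ φ D T ρ N' N d < 0 := by
    unfold g
    rw [hsqrt]
    apply div_neg_of_neg_of_pos <;> [norm_num; positivity]
  linarith

lemma B_nonneg_of_mem_Icc {σ φ D T ρ N d : ℝ} (hσ : 0 < σ) (hρ : 0 < ρ) (hN : 0 < N)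
    (hd : d ∈ Set.Icc 0 (g σ φ D T ρ 0 N 0)) : 0 ≤ B σ φ D T ρ N d := by
  have hg₀ : 0 ≤ g σ φ D T ρ 0 N 0 := hd.1.trans hd.2
  have hq₀ := q_g hσ.ne' hρ.ne' hN.ne' (one_add_nonneg_of_g_nonneg hσ hρ hg₀)
  rw [B_eq_B_zero_sub_q, sub_nonneg, ← hq₀]
  exact q_monotoneOn hσ.le hρ.le hN.le hd.1 hg₀ hd.2

lemma q_add_q_g {σ φ D T ρ N₁ N₂ d : ℝ} (hσ : 0 < σ) (hρ : 0 < ρ) (hN₂ : 0 < N₂)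
    (hB : 0 ≤ B σ φ D T ρ N₁ d) :
    q σ ρ N₁ d + q σ ρ N₂ (g σ φ D T ρ N₁ N₂ d) = B σ φ D T ρ 0 0 := by
  rw [q_g hσ.ne' hρ.ne' hN₂.ne' (by positivity), B_eq_B_zero_sub_q σ φ D T ρ N₁ d]
  ring

lemma eq_of_add_mul_eq_add_mul {a b c e ρ₁ ρ₂ : ℝ} (hne : ρ₁ ≠ ρ₂)
    (h₁ : a + ρ₁ * b = c + ρ₁ * e) (h₂ : a + ρ₂ * b = c + ρ₂ * e) : a = c := by
  have hbe : b = e := by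
    have : (ρ₁ - ρ₂) * (b - e) = 0 := by linear_combination h₁ - h₂
    linarith [(mul_eq_zero.1 this).resolve_left (sub_ne_zero.2 hne)]
  linear_combination h₁ - ρ₁ * hbe

theorem stmt_7_general (σ φ D T : ℝ) (hσ : 0 < σ)
    (N₁ N₂ : ℕ) (hN₁ : 0 < N₁) (hN₂ : 0 < N₂)
    (ρ₁ ρ₂ : ℝ) (hρ₁ : 0 < ρ₁) (hρ₂ : 0 < ρ₂) (hne : ρ₁ ≠ ρ₂)
    (d₁ : ℝ) (hd₁ : d₁ ∈ Set.Icc 0 (min (g σ φ D T ρ₁ 0 N₁ 0) (g σ φ D T ρ₂ 0 N₁ 0)))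
    (heq : g σ φ D T ρ₁ N₁ N₂ d₁ = g σ φ D T ρ₂ N₁ N₂ d₁) :
    σ * (N₁ * d₁ + N₂ * g σ φ D T ρ₁ N₁ N₂ d₁) = φ * D ∧
    d₁ = (φ * D - σ * N₂ * g σ φ D T ρ₁ N₁ N₂ d₁) / (σ * N₁) := by
  have hN₁' : (0 : ℝ) < N₁ := by exact_mod_cast hN₁
  have hN₂' : (0 : ℝ) < N₂ := by exact_mod_cast hN₂
  have hB₁ := B_nonneg_of_mem_Icc hσ hρ₁ hN₁' ⟨hd₁.1, hd₁.2.trans (min_le_left _ _)⟩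
  have hB₂ := B_nonneg_of_mem_Icc hσ hρ₂ hN₁' ⟨hd₁.1, hd₁.2.trans (min_le_right _ _)⟩
  have h₁ := q_add_q_g hσ hρ₁ hN₂' hB₁
  have h₂ := q_add_q_g hσ hρ₂ hN₂' hB₂
  rw [← heq] at h₂
  set d₂ := g σ φ D T ρ₁ N₁ N₂ d₁
  unfold q B at h₁ h₂
  have hmain : σ * (N₁ * d₁ + N₂ * d₂) = φ * D :=
    eq_of_add_mul_eq_add_mul (b := σ ^ 2 * (N₁ * d₁ ^ 2 + N₂ * d₂ ^ 2)) (e := (φ * D) ^ 2 / T)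
      hne (by linear_combination h₁) (by linear_combination h₂)
  refine ⟨hmain, ?_⟩
  rw [eq_div_iff (by positivity)]
  linear_combination hmain

/-- if `g(d₁,N₁,N₂;ρ₁) = g(d₁,N₁,N₂;ρ₂)` with `ρ₁ ≠ ρ₂`, then, writing `d₂` for
the common value, `σ(N₁d₁ + N₂d₂) = φD`, i.e. `d₁ = (φD − σN₂d₂)/(σN₁)`. -/
theorem stmt_7 (σ φ D T : ℝ) (hσ : 0 < σ) (hφ : 0 < φ) (hD : 0 < D) (hT : 0 < T)
    (N₁ N₂ : ℕ) (hN₁ : 0 < N₁) (hN₂ : 0 < N₂)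
    (ρ₁ ρ₂ : ℝ) (hρ₁ : 0 < ρ₁) (hρ₂ : 0 < ρ₂) (hne : ρ₁ ≠ ρ₂)
    (d₁ : ℝ) (hd₁ : d₁ ∈ Set.Icc 0 (min (g σ φ D T ρ₁ 0 N₁ 0) (g σ φ D T ρ₂ 0 N₁ 0)))
    (heq : g σ φ D T ρ₁ N₁ N₂ d₁ = g σ φ D T ρ₂ N₁ N₂ d₁) :
    σ * (N₁ * d₁ + N₂ * g σ φ D T ρ₁ N₁ N₂ d₁) = φ * D ∧
    d₁ = (φ * D - σ * N₂ * g σ φ D T ρ₁ N₁ N₂ d₁) / (σ * N₁) :=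
  stmt_7_general σ φ D T hσ N₁ N₂ hN₁ hN₂ ρ₁ ρ₂ hρ₁ hρ₂ hne d₁ hd₁ heq
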